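/- For smooth functions w and φ on an open set in ℝ², the identity m²|∇φ|² w (2∇φ·∇w + (Δφ)w) = div(m²|∇φ|²∇φ |w|²) - 2m²(Hess φ)(∇φ, ∇φ)|w|² holds pointwise for any real m. -/

import Mathlib

open MeasureTheory Real Set Filter Topology

noncomputable def pdx (f : ℝ × ℝ → ℝ) (p : ℝ × ℝ) : ℝ := fderiv ℝ f p (1, 0)
noncomputable def pdy (f : ℝ × ℝ → ℝ) (p : ℝ × ℝ) : ℝ := fderiv ℝ f p (0, 1)
noncomputable def grad (f : ℝ × ℝ → ℝ) (p : ℝ × ℝ) : ℝ × ℝ := (pdx f p, pdy f p)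
noncomputable def pgrad (f : ℝ × ℝ → ℝ) (p : ℝ × ℝ) : ℝ × ℝ := (-pdy f p, pdx f p)
noncomputable def lap (f : ℝ × ℝ → ℝ) (p : ℝ × ℝ) : ℝ := pdx (pdx f) p + pdy (pdy f) p
def dotp (v w : ℝ × ℝ) : ℝ := v.1 * w.1 + v.2 * w.2
noncomputable def hess (f : ℝ × ℝ → ℝ) (p v w : ℝ × ℝ) : ℝ :=
  fderiv ℝ (fun q => fderiv ℝ f q v) p w
noncomputable def divg (V : ℝ × ℝ → ℝ × ℝ) (p : ℝ × ℝ) : ℝ :=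
  fderiv ℝ (fun q => (V q).1) p (1, 0) + fderiv ℝ (fun q => (V q).2) p (0, 1)

lemma eval2 (L : (ℝ × ℝ) →L[ℝ] ℝ) (a b : ℝ) :
    L (a, b) = a * L (1, 0) + b * L (0, 1) := by
  have h : ((a, b) : ℝ × ℝ) = a • ((1 : ℝ), (0 : ℝ)) + b • ((0 : ℝ), (1 : ℝ)) := by
    simp [Prod.ext_iff]
  rw [h, map_add, _root_.map_smul, _root_.map_smul, smul_eq_mul, smul_eq_mul]

/-- pointwise identity
`m²|∇φ|² w (2∇φ·∇w + (Δφ)w) = div(m²|∇φ|²∇φ|w|²) - 2m² Hessφ(∇φ,∇φ)|w|²`. -/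
theorem stmt7 (U : Set (ℝ × ℝ)) (hU : IsOpen U)
    (w φ : ℝ × ℝ → ℝ) (hw : ContDiffOn ℝ (⊤ : ℕ∞) w U) (hφ : ContDiffOn ℝ (⊤ : ℕ∞) φ U)
    (m : ℝ) :
    ∀ p ∈ U,
      m ^ 2 * dotp (grad φ p) (grad φ p) * w p *
          (2 * dotp (grad φ p) (grad w p) + lap φ p * w p) =
        divg (fun q => (m ^ 2 * dotp (grad φ q) (grad φ q) * (w q) ^ 2) • grad φ q) p -
          2 * m ^ 2 * hess φ p (grad φ p) (grad φ p) * (w p) ^ 2 := by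
  intro p hp
  have hmem := hU.mem_nhds hp
  have hφp : ContDiffAt ℝ (⊤ : ℕ∞) φ p := hφ.contDiffAt hmem
  have hwp : ContDiffAt ℝ (⊤ : ℕ∞) w p := hw.contDiffAt hmem
  have hdf : ContDiffAt ℝ (⊤ : ℕ∞) (fderiv ℝ φ) p := hφp.fderiv_right (by simp)
  have hφx : ContDiffAt ℝ (⊤ : ℕ∞) (pdx φ) p := hdf.clm_apply contDiffAt_const
  have hφy : ContDiffAt ℝ (⊤ : ℕ∞) (pdy φ) p := hdf.clm_apply contDiffAt_const
  have hDx : HasFDerivAt (pdx φ) (fderiv ℝ (pdx φ) p) p :=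
    (hφx.differentiableAt (by simp)).hasFDerivAt
  have hDy : HasFDerivAt (pdy φ) (fderiv ℝ (pdy φ) p) p :=
    (hφy.differentiableAt (by simp)).hasFDerivAt
  have hDw : HasFDerivAt w (fderiv ℝ w p) p :=
    (hwp.differentiableAt (by simp)).hasFDerivAt
  set Dx := fderiv ℝ (pdx φ) p
  set Dy := fderiv ℝ (pdy φ) p
  set Dw := fderiv ℝ w p
  -- derivative of the squared gradient
  have hS : HasFDerivAt (fun q => pdx φ q * pdx φ q + pdy φ q * pdy φ q)
      ((pdx φ p • Dx + pdx φ p • Dx) + (pdy φ p • Dy + pdy φ p • Dy)) p :=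
    (hDx.mul hDx).add (hDy.mul hDy)
  have hW2 : HasFDerivAt (fun q => w q ^ 2) (w p • Dw + w p • Dw) p := by
    simpa [pow_two] using hDw.fun_mul hDw
  have hc : HasFDerivAt
      (fun q => m ^ 2 * (pdx φ q * pdx φ q + pdy φ q * pdy φ q) * w q ^ 2)
      ((m ^ 2 * (pdx φ p * pdx φ p + pdy φ p * pdy φ p)) • (w p • Dw + w p • Dw) +
        (w p ^ 2) • (m ^ 2 • ((pdx φ p • Dx + pdx φ p • Dx) + (pdy φ p • Dy + pdy φ p • Dy)))) p :=
    (hS.const_mul (m ^ 2)).mul hW2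
  have hF1 := hc.fun_mul hDx
  have hF2 := hc.fun_mul hDy
  -- rewrite the divergence components
  have e1 : (fun q => ((m ^ 2 * dotp (grad φ q) (grad φ q) * (w q) ^ 2) • grad φ q).1)
      = fun q => m ^ 2 * (pdx φ q * pdx φ q + pdy φ q * pdy φ q) * w q ^ 2 * pdx φ q := by
    funext q; simp [dotp, grad, smul_eq_mul]
  have e2 : (fun q => ((m ^ 2 * dotp (grad φ q) (grad φ q) * (w q) ^ 2) • grad φ q).2)
      = fun q => m ^ 2 * (pdx φ q * pdx φ q + pdy φ q * pdy φ q) * w q ^ 2 * pdy φ q := by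
    funext q; simp [dotp, grad, smul_eq_mul]
  -- hess computation
  have hv : (fun q => fderiv ℝ φ q (grad φ p))
      = fun q => pdx φ p * pdx φ q + pdy φ p * pdy φ q := by
    funext q
    simpa [grad, pdx, pdy] using eval2 (fderiv ℝ φ q) (pdx φ p) (pdy φ p)
  have hH : HasFDerivAt (fun q => fderiv ℝ φ q (grad φ p))
      (pdx φ p • Dx + pdy φ p • Dy) p := by
    rw [hv]; exact (hDx.const_mul (pdx φ p)).add (hDy.const_mul (pdy φ p))
  have hhess : hess φ p (grad φ p) (grad φ p)
      = (pdx φ p • Dx + pdy φ p • Dy) (grad φ p) := by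
    rw [hess, hH.fderiv]
  rw [divg, e1, e2, hF1.fderiv, hF2.fderiv, hhess]
  simp only [grad, lap, dotp, ContinuousLinearMap.add_apply, ContinuousLinearMap.smul_apply,
    smul_eq_mul, eval2 Dx (pdx φ p) (pdy φ p), eval2 Dy (pdx φ p) (pdy φ p)]
  have lx : pdx (pdx φ) p = Dx (1, 0) := rfl
  have ly : pdy (pdy φ) p = Dy (0, 1) := rfl
  have lwx : pdx w p = Dw (1, 0) := rfl
  have lwy : pdy w p = Dw (0, 1) := rfl
  rw [lx, ly, lwx, lwy]
  ring
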